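/- Let F be the free group on h generators, let R ⊆ F be a finite set of k relations, and let Γ = F / ⟪R⟫ be the corresponding presented group (the quotient of F by the normal closure of R). Let Γ' be a group generated by n elements and let α: Γ' → Γ be a surjective group homomorphism. Then there exists a subset S of Γ' of cardinality at most k + n whose normal closure in Γ' equals ker α. -/
import Mathlib


/-- Let `F` be the free group on `h` generators, `R ⊆ F` a finite set of `k`
relations, and `Γ = F / ⟪R⟫` the corresponding presented group (the quotient of
`F` by the normal closure of `R`).  Let `Γ'` be a group generated by `n`
elements and `α : Γ' → Γ` a surjective group homomorphism.  Then there is a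
subset `S` of `Γ'` of cardinality at most `k + n` whose normal closure in `Γ'`
equals `ker α`. -/
theorem ker_normally_generated_card_le
    {h k n : ℕ} (R : Finset (FreeGroup (Fin h))) (hR : R.card = k)
    {Γ' : Type*} [Group Γ']
    (hΓ' : ∃ T : Finset Γ', T.card ≤ n ∧ Subgroup.closure (T : Set Γ') = ⊤)
    (α : Γ' →* FreeGroup (Fin h) ⧸ Subgroup.normalClosure (R : Set (FreeGroup (Fin h))))
    (hα : Function.Surjective α) :
    ∃ S : Finset Γ', S.card ≤ k + n ∧ Subgroup.normalClosure (S : Set Γ') = α.ker := by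
  classical
  obtain ⟨T, hTcard, hTtop⟩ := hΓ'
  let NR := Subgroup.normalClosure (R : Set (FreeGroup (Fin h)))
  let π : FreeGroup (Fin h) →* FreeGroup (Fin h) ⧸ NR := QuotientGroup.mk' NR
  have hπ : Function.Surjective π := QuotientGroup.mk'_surjective NR
  -- section of α
  let σ := Function.surjInv hα
  have hσ : ∀ x, α (σ x) = x := fun x => Function.surjInv_eq hα x
  -- section of π
  let τ := Function.surjInv hπ
  have hτ : ∀ x, π (τ x) = x := fun x => Function.surjInv_eq hπ x
  -- β : F →* Γ' lifting generators
  let β : FreeGroup (Fin h) →* Γ' := FreeGroup.lift fun i => σ (π (FreeGroup.of i))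
  have hβ : ∀ w : FreeGroup (Fin h), α (β w) = π w := by
    intro w
    have h1 : α.comp β = π := by
      apply FreeGroup.ext_hom
      intro i
      simp [β, hσ]
    calc α (β w) = (α.comp β) w := rfl
    _ = π w := by rw [h1]
  -- the finite set S
  let S : Finset Γ' := R.image β ∪ T.image (fun g => g * (β (τ (α g)))⁻¹)
  refine ⟨S, ?_, ?_⟩
  · calc S.card ≤ (R.image β).card + (T.image (fun g => g * (β (τ (α g)))⁻¹)).card :=
        Finset.card_union_le _ _
    _ ≤ k + n := by
        gcongr
        · exact hR ▸ Finset.card_image_le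
        · exact le_trans Finset.card_image_le hTcard
  · have hSsub : (S : Set Γ') ⊆ α.ker := by
      intro x hx
      simp only [S, Finset.coe_union, Set.mem_union, Finset.coe_image, Set.mem_image] at hx
      rcases hx with ⟨r, hr, rfl⟩ | ⟨g, hg, rfl⟩
      · have hr1 : π r = 1 := by
          have : r ∈ NR := Subgroup.subset_normalClosure hr
          simpa [π, QuotientGroup.eq_one_iff] using this
        have : α (β r) = 1 := by rw [hβ, hr1]
        simpa [MonoidHom.mem_ker] using this
      · have : α (g * (β (τ (α g)))⁻¹) = 1 := by
          rw [map_mul, map_inv, hβ, hτ, mul_inv_cancel]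
        simpa [MonoidHom.mem_ker] using this
    have hle : Subgroup.normalClosure (S : Set Γ') ≤ α.ker :=
      Subgroup.normalClosure_le_normal hSsub
    refine le_antisymm hle ?_
    -- the reverse inclusion
    set N := Subgroup.normalClosure (S : Set Γ') with hN
    let proj : Γ' →* Γ' ⧸ N := QuotientGroup.mk' N
    have hRker : NR ≤ (proj.comp β).ker := by
      apply Subgroup.normalClosure_le_normal
      intro r hr
      have hβr : β r ∈ N := Subgroup.subset_normalClosure (by
        simp only [S, Finset.coe_union, Set.mem_union, Finset.coe_image, Set.mem_image]
        exact Or.inl ⟨r, hr, rfl⟩)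
      simpa [MonoidHom.mem_ker, proj, QuotientGroup.eq_one_iff] using hβr
    let γ : (FreeGroup (Fin h) ⧸ NR) →* Γ' ⧸ N := QuotientGroup.lift NR (proj.comp β) hRker
    have hγπ : ∀ w : FreeGroup (Fin h), γ (π w) = proj (β w) := fun w => rfl
    have hγα : ∀ g : Γ', γ (α g) = proj g := by
      have key : ∀ g ∈ Subgroup.closure (T : Set Γ'), γ (α g) = proj g := by
        intro g hg
        induction hg using Subgroup.closure_induction with
        | mem x hx =>
            have hx' : x * (β (τ (α x)))⁻¹ ∈ N := Subgroup.subset_normalClosure (by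
              simp only [S, Finset.coe_union, Set.mem_union, Finset.coe_image, Set.mem_image]
              exact Or.inr ⟨x, hx, rfl⟩)
            have h1 : proj (x * (β (τ (α x)))⁻¹) = 1 :=
              (QuotientGroup.eq_one_iff _).mpr hx'
            have h2 : proj x = proj (β (τ (α x))) := by
              rw [map_mul, map_inv] at h1
              exact (mul_inv_eq_one.mp h1)
            rw [← hτ (α x), hγπ, ← h2]
        | one => simp
        | mul x y _ _ ihx ihy => simp [map_mul, ihx, ihy]
        | inv x _ ihx => simp [map_inv, ihx]
      intro g
      exact key g (hTtop ▸ Subgroup.mem_top g)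
    intro x hx
    have hx1 : proj x = 1 := by
      rw [← hγα x, MonoidHom.mem_ker.mp hx, map_one]
    exact (QuotientGroup.eq_one_iff x).mp hx1
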